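/- Let I ⊆ ℝ∖{0,1} be an open interval and let F₁₂, F₁₃, F₂₃ : I → ℝ be differentiable functions satisfying F₁₂′(z) = F₁₃(z)F₂₃(z)/(z(z−1)), F₁₃′(z) = −F₁₂(z)F₂₃(z)/(z−1), F₂₃′(z) = F₁₂(z)F₁₃(z)/z on I, and let R² denote the constant value of F₁₂² + F₁₃² + F₂₃². Define σ : I → ℝ by σ(z) = z·F₁₂(z)² + F₁₃(z)² − R²/2. Then σ′(z) = F₁₂(z)² on I, and σ satisfies the sigma form of the Painlevé VI equation: z²(z−1)²(σ″)² + 4[σ′(zσ′−σ)² − (σ′)²(zσ′−σ)] = −2R²(σ′)² + R⁴σ′ on I. -/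

import Mathlib

/-!
Along the Darboux–Egorov flow the two terms of `σ = z F₁₂² + F₁₃² − R²/2` differentiate to
`F₁₂² + 2F₁₂F₁₃F₂₃/(z − 1)` and `−2F₁₂F₁₃F₂₃/(z − 1)`, which cancel, so `σ′ = F₁₂²` and
`z(z − 1)σ″ = 2F₁₂F₁₃F₂₃`. Then `zσ′ − σ = R²/2 − F₁₃²`, and after eliminating `F₂₃²` with the
first integral the sigma form of Painlevé VI becomes a polynomial identity.
-/

theorem hasDerivAt_sigma {F12 F13 : ℝ → ℝ} {g z : ℝ} (c : ℝ)
    (hz0 : z ≠ 0) (hz1 : z - 1 ≠ 0)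
    (hF12 : HasDerivAt F12 (F13 z * g / (z * (z - 1))) z)
    (hF13 : HasDerivAt F13 (-(F12 z * g) / (z - 1)) z) :
    HasDerivAt (fun w => w * F12 w ^ 2 + F13 w ^ 2 - c) (F12 z ^ 2) z := by
  refine ((((hasDerivAt_id' z).mul (hF12.pow 2)).add (hF13.pow 2)).sub_const c).congr_deriv ?_
  simp only [Pi.pow_apply]
  field_simp
  ring

theorem sigma_form_painleve_six {z a b c R2 s s' s'' : ℝ}
    (hs : s = z * a ^ 2 + b ^ 2 - R2 / 2) (hs' : s' = a ^ 2)
    (hs'' : z * (z - 1) * s'' = 2 * a * b * c) (hR : a ^ 2 + b ^ 2 + c ^ 2 = R2) :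
    z ^ 2 * (z - 1) ^ 2 * s'' ^ 2 + 4 * (s' * (z * s' - s) ^ 2 - s' ^ 2 * (z * s' - s))
      = -2 * R2 * s' ^ 2 + R2 ^ 2 * s' := by
  subst hs hs'
  linear_combination (z * (z - 1) * s'' + 2 * a * b * c) * hs'' + 4 * a ^ 2 * b ^ 2 * hR

theorem stmt_3 (I : Set ℝ) (hIopen : IsOpen I)
    (h0 : (0 : ℝ) ∉ I) (h1 : (1 : ℝ) ∉ I)
    (F12 F13 F23 : ℝ → ℝ)
    (hF12 : ∀ z ∈ I, HasDerivAt F12 (F13 z * F23 z / (z * (z - 1))) z)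
    (hF13 : ∀ z ∈ I, HasDerivAt F13 (-(F12 z * F23 z) / (z - 1)) z)
    (R2 : ℝ)
    (hR2 : ∀ z ∈ I, F12 z ^ 2 + F13 z ^ 2 + F23 z ^ 2 = R2) :
    let σ : ℝ → ℝ := fun z => z * F12 z ^ 2 + F13 z ^ 2 - R2 / 2
    ∀ z ∈ I,
      deriv σ z = F12 z ^ 2 ∧
      z ^ 2 * (z - 1) ^ 2 * (deriv (deriv σ) z) ^ 2
          + 4 * (deriv σ z * (z * deriv σ z - σ z) ^ 2
              - (deriv σ z) ^ 2 * (z * deriv σ z - σ z))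
        = -2 * R2 * (deriv σ z) ^ 2 + R2 ^ 2 * deriv σ z := by
  intro σ
  have hz0 : ∀ z ∈ I, z ≠ 0 := fun z hz => ne_of_mem_of_not_mem hz h0
  have hz1 : ∀ z ∈ I, z - 1 ≠ 0 := fun z hz => sub_ne_zero.mpr (ne_of_mem_of_not_mem hz h1)
  have hσ' : ∀ z ∈ I, HasDerivAt σ (F12 z ^ 2) z := fun z hz =>
    hasDerivAt_sigma _ (hz0 z hz) (hz1 z hz) (hF12 z hz) (hF13 z hz)
  intro z hz
  have hderiv : deriv σ =ᶠ[nhds z] fun w => F12 w ^ 2 :=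
    Filter.eventuallyEq_of_mem (hIopen.mem_nhds hz) fun w hw => (hσ' w hw).deriv
  have hσ'' : deriv (deriv σ) z = 2 * F12 z ^ 1 * (F13 z * F23 z / (z * (z - 1))) := by
    rw [hderiv.deriv_eq]
    exact ((hF12 z hz).pow 2).deriv
  refine ⟨(hσ' z hz).deriv, sigma_form_painleve_six rfl (hσ' z hz).deriv ?_ (hR2 z hz)⟩
  rw [hσ'']
  field_simp [hz0 z hz, hz1 z hz]
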